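/- arXiv:2101.00817 — 8 statements merged into one kernel-verified Lean document; each statement's English description precedes it below -/
import Mathlib

section
/- If g(p) = -(p + N - M/2)² + M²/4 - MN (with M, N > 0) has no root in (0,1], then g(p) < 0 for all p ∈ (0,1], f(p) = -ln p - M/(N+p) - K is strictly decreasing on (0,1], and hence f has exactly one root in (0,1). -/
open Real Set

/-!
Expanding the square, `g p = M p - (N + p)²`, so `g 0 = -N² < 0`; a continuous function with no
root on `(0, 1]` therefore stays negative there. Since `f' p = g p / (p (N + p)²)`, `f` is strictly
decreasing on `(0, 1]`. Finally `f 1 = -M / (N + 1) - K < 0`, while `f p > 0` as soon as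
`log p < -(M / N + K)`, so the intermediate value theorem gives a root, unique by monotonicity.
-/

theorem neg_of_neg_left_of_forall_ne_zero {g : ℝ → ℝ} {a b : ℝ} (hg : ContinuousOn g (Icc a b))
    (ha : g a < 0) (hne : ∀ x ∈ Ioc a b, g x ≠ 0) : ∀ x ∈ Ioc a b, g x < 0 := by
  intro x hx
  refine (hne x hx).lt_or_gt.resolve_right fun hpos => ?_
  obtain ⟨c, hc, hc0⟩ :=
    intermediate_value_Ioo hx.1.le (hg.mono (Icc_subset_Icc_right hx.2)) ⟨ha, hpos⟩
  exact hne c ⟨hc.1, hc.2.le.trans hx.2⟩ hc0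

theorem StrictAntiOn.existsUnique_mem_Ioo_eq_zero {f : ℝ → ℝ} {a b c : ℝ}
    (hanti : StrictAntiOn f (Ioc a b)) (hcont : ContinuousOn f (Ioc a b)) (hc : c ∈ Ioo a b)
    (hfc : 0 < f c) (hfb : f b < 0) : ∃! p, p ∈ Ioo a b ∧ f p = 0 := by
  obtain ⟨p, hp, hp0⟩ := intermediate_value_Ioo' hc.2.le
    (hcont.mono fun x hx => ⟨hc.1.trans_le hx.1, hx.2⟩) ⟨hfb, hfc⟩
  have hpab : p ∈ Ioo a b := ⟨hc.1.trans hp.1, hp.2⟩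
  exact ⟨p, ⟨hpab, hp0⟩, fun q ⟨hq, hq0⟩ =>
    hanti.injOn (Ioo_subset_Ioc_self hq) (Ioo_subset_Ioc_self hpab) (hq0.trans hp0.symm)⟩

section

variable {M N K : ℝ}

theorem hasDerivAt_neg_log_sub_div (hN : 0 < N) {p : ℝ} (hp : 0 < p) :
    HasDerivAt (fun x => -log x - M / (N + x) - K)
      ((M * p - (N + p) ^ 2) / (p * (N + p) ^ 2)) p := by
  have hNp : N + p ≠ 0 := by positivity
  have hdiv := (hasDerivAt_const p M).fun_div ((hasDerivAt_id' p).const_add N) hNp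
  have h : HasDerivAt (fun x => -log x - M / (N + x) - K)
      (-p⁻¹ - (0 * (N + p) - M * 1) / (N + p) ^ 2) p :=
    ((hasDerivAt_log hp.ne').neg.sub hdiv).sub_const K
  convert h using 1
  field_simp
  ring

theorem strictAntiOn_neg_log_sub_div (hN : 0 < N) {b : ℝ}
    (hneg : ∀ p ∈ Ioc 0 b, M * p - (N + p) ^ 2 < 0) :
    StrictAntiOn (fun x => -log x - M / (N + x) - K) (Ioc 0 b) := by
  refine strictAntiOn_of_deriv_neg (convex_Ioc 0 b)
    (fun x hx => (hasDerivAt_neg_log_sub_div hN hx.1).continuousAt.continuousWithinAt)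
    fun x hx => ?_
  rw [interior_Ioc] at hx
  rw [(hasDerivAt_neg_log_sub_div hN hx.1).deriv]
  exact div_neg_of_neg_of_pos (hneg x (Ioo_subset_Ioc_self hx))
    (mul_pos hx.1 (pow_pos (add_pos hN hx.1) 2))

theorem neg_log_sub_div_pos (hM : 0 ≤ M) (hN : 0 < N) {p : ℝ} (hp : 0 < p)
    (hlog : log p < -(M / N + K)) : 0 < -log p - M / (N + p) - K := by
  have : M / (N + p) ≤ M / N := div_le_div_of_nonneg_left hM hN (by linarith)
  linarith

end

theorem stmt2 (M N K : ℝ) (hM : 0 < M) (hN : 0 < N) (hK : 0 < K)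
    (f g : ℝ → ℝ)
    (hf : ∀ p, f p = -Real.log p - M / (N + p) - K)
    (hg : ∀ p, g p = -(p + N - M / 2) ^ 2 + M ^ 2 / 4 - M * N)
    (hnoroot : ∀ p ∈ Ioc (0:ℝ) 1, g p ≠ 0) :
    (∀ p ∈ Ioc (0:ℝ) 1, g p < 0) ∧
    StrictAntiOn f (Ioc (0:ℝ) 1) ∧
    (∃! p : ℝ, p ∈ Ioo (0:ℝ) 1 ∧ f p = 0) := by
  obtain rfl : f = fun x => -log x - M / (N + x) - K := funext hf
  have hg' : ∀ p, g p = M * p - (N + p) ^ 2 := fun p => by rw [hg]; ring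
  have hgneg : ∀ p ∈ Ioc (0:ℝ) 1, g p < 0 :=
    neg_of_neg_left_of_forall_ne_zero (by rw [funext hg']; fun_prop)
      (by rw [hg']; nlinarith) hnoroot
  have hanti := strictAntiOn_neg_log_sub_div (K := K) hN fun p hp => hg' p ▸ hgneg p hp
  refine ⟨hgneg, hanti, hanti.existsUnique_mem_Ioo_eq_zero
    (fun x hx => (hasDerivAt_neg_log_sub_div hN hx.1).continuousAt.continuousWithinAt)
    (c := exp (-(M / N + K + 1))) ⟨exp_pos _, exp_lt_one_iff.2 ?_⟩
    (neg_log_sub_div_pos hM.le hN (exp_pos _) (by rw [log_exp]; linarith)) ?_⟩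
  · linarith [div_pos hM hN]
  · simp only [log_one]
    linarith [div_pos hM (add_pos hN one_pos)]
end

section
/- Suppose M, N, K > 0 and g(p) = -(p + N - M/2)² + M²/4 - MN has two roots p₁' < p₂' both lying in (0,1), with f(p₁') < 0 and f(p₂') > 0 where f(p) = -ln p - M/(N+p) - K. Then f has exactly three roots in (0,1), one in each of the intervals (0, p₁'), (p₁', p₂'), (p₂', 1). -/
open Real Set Filter Topology

/-! Since `g p = M p - (N + p)²`, its roots factor it as `-(p - p₁)(p - p₂)`, and
`f' p = g p / (p (N + p)²)`. Hence `f` is strictly decreasing on `(0, p₁)`, increasing on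
`(p₁, p₂)` and decreasing on `(p₂, 1)`, so it has at most one root on each. The intermediate value
theorem supplies one, using `f → +∞` at `0⁺`, `f p₁ < 0 < f p₂` and `f 1 = -M/(N+1) - K < 0`. -/

lemma mul_sub_sq_eq_neg_mul_of_roots {M N p₁ p₂ : ℝ} (h12 : p₁ ≠ p₂)
    (h₁ : M * p₁ - (N + p₁) ^ 2 = 0) (h₂ : M * p₂ - (N + p₂) ^ 2 = 0) (x : ℝ) :
    M * x - (N + x) ^ 2 = -((x - p₁) * (x - p₂)) := by
  have hsum : p₁ + p₂ + 2 * N - M = 0 := by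
    have h : (p₂ - p₁) * (p₁ + p₂ + 2 * N - M) = 0 := by linear_combination h₁ - h₂
    exact (mul_eq_zero.mp h).resolve_left (sub_ne_zero.mpr h12.symm)
  linear_combination h₁ + (p₁ - x) * hsum

lemma existsUnique_zero_of_strictAntiOn {f : ℝ → ℝ} {a b c d : ℝ} (hac : a ≤ c) (hcd : c ≤ d)
    (hdb : d ≤ b) (hcont : ContinuousOn f (Icc c d)) (hanti : StrictAntiOn f (Ioo a b))
    (hc : 0 < f c) (hd : f d < 0) : ∃! p, p ∈ Ioo a b ∧ f p = 0 := by
  obtain ⟨p, hp, hfp⟩ := intermediate_value_Ioo' hcd hcont ⟨hd, hc⟩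
  have hpab : p ∈ Ioo a b := ⟨hac.trans_lt hp.1, hp.2.trans_le hdb⟩
  exact ⟨p, ⟨hpab, hfp⟩, fun q ⟨hq, hfq⟩ => hanti.injOn hq hpab (hfq.trans hfp.symm)⟩

lemma existsUnique_zero_of_strictMonoOn {f : ℝ → ℝ} {a b c d : ℝ} (hac : a ≤ c) (hcd : c ≤ d)
    (hdb : d ≤ b) (hcont : ContinuousOn f (Icc c d)) (hmono : StrictMonoOn f (Ioo a b))
    (hc : f c < 0) (hd : 0 < f d) : ∃! p, p ∈ Ioo a b ∧ f p = 0 := by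
  obtain ⟨p, hp, hfp⟩ := intermediate_value_Ioo hcd hcont ⟨hc, hd⟩
  have hpab : p ∈ Ioo a b := ⟨hac.trans_lt hp.1, hp.2.trans_le hdb⟩
  exact ⟨p, ⟨hpab, hfp⟩, fun q ⟨hq, hfq⟩ => hmono.injOn hq hpab (hfq.trans hfp.symm)⟩

section

variable (M N K : ℝ)

lemma hasDerivAt_neg_log_sub_div_sub {x : ℝ} (hx : x ≠ 0) (hNx : N + x ≠ 0) :
    HasDerivAt (fun p => -log p - M / (N + p) - K)
      ((M * x - (N + x) ^ 2) / (x * (N + x) ^ 2)) x := by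
  have h : HasDerivAt (fun p => -log p - M / (N + p) - K)
      (-x⁻¹ - (0 * (N + x) - M * 1) / (N + x) ^ 2) x :=
    ((hasDerivAt_log hx).neg.sub
      ((hasDerivAt_const x M).div ((hasDerivAt_id' x).const_add N) hNx)).sub_const K
  convert h using 1
  field_simp
  ring

variable {M N K}

lemma continuousOn_neg_log_sub_div_sub (hN : 0 < N) :
    ContinuousOn (fun p => -log p - M / (N + p) - K) (Ioi 0) := fun x (hx : 0 < x) =>
  (hasDerivAt_neg_log_sub_div_sub M N K hx.ne' (add_pos hN hx).ne').continuousAt.continuousWithinAt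

lemma tendsto_neg_log_sub_div_sub_nhdsGT_zero (hN : 0 < N) :
    Tendsto (fun p => -log p - M / (N + p) - K) (𝓝[>] 0) atTop := by
  have hrest : Tendsto (fun p => -(M / (N + p)) - K) (𝓝[>] 0) (𝓝 (-(M / (N + 0)) - K)) :=
    ((continuousAt_const.div (continuousAt_const.add continuousAt_id)
      (by simpa using hN.ne')).neg.sub continuousAt_const).tendsto.mono_left nhdsWithin_le_nhds
  convert (tendsto_neg_atBot_atTop.comp tendsto_log_nhdsGT_zero).atTop_add hrest using 2 with p
  simp only [Function.comp_apply]
  ring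

lemma strictAntiOn_neg_log_sub_div_sub (hN : 0 < N) {a b : ℝ} (ha : 0 ≤ a)
    (hq : ∀ x ∈ Ioo a b, M * x - (N + x) ^ 2 < 0) :
    StrictAntiOn (fun p => -log p - M / (N + p) - K) (Ioo a b) := by
  refine strictAntiOn_of_deriv_neg (convex_Ioo a b)
    ((continuousOn_neg_log_sub_div_sub hN).mono fun x hx => ha.trans_lt hx.1) fun x hx => ?_
  rw [interior_Ioo] at hx
  have hx0 : 0 < x := ha.trans_lt hx.1
  rw [(hasDerivAt_neg_log_sub_div_sub M N K hx0.ne' (by positivity)).deriv]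
  exact div_neg_of_neg_of_pos (hq x hx) (by positivity)

lemma strictMonoOn_neg_log_sub_div_sub (hN : 0 < N) {a b : ℝ} (ha : 0 ≤ a)
    (hq : ∀ x ∈ Ioo a b, 0 < M * x - (N + x) ^ 2) :
    StrictMonoOn (fun p => -log p - M / (N + p) - K) (Ioo a b) := by
  refine strictMonoOn_of_deriv_pos (convex_Ioo a b)
    ((continuousOn_neg_log_sub_div_sub hN).mono fun x hx => ha.trans_lt hx.1) fun x hx => ?_
  rw [interior_Ioo] at hx
  have hx0 : 0 < x := ha.trans_lt hx.1
  rw [(hasDerivAt_neg_log_sub_div_sub M N K hx0.ne' (by positivity)).deriv]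
  exact div_pos (hq x hx) (by positivity)

end

theorem stmt3 (M N K p₁ p₂ : ℝ) (hM : 0 < M) (hN : 0 < N) (hK : 0 < K)
    (f g : ℝ → ℝ)
    (hf : ∀ p, f p = -Real.log p - M / (N + p) - K)
    (hg : ∀ p, g p = -(p + N - M / 2) ^ 2 + M ^ 2 / 4 - M * N)
    (h0 : 0 < p₁) (h12 : p₁ < p₂) (h21 : p₂ < 1)
    (hg1 : g p₁ = 0) (hg2 : g p₂ = 0)
    (hf1 : f p₁ < 0) (hf2 : 0 < f p₂) :
    (∃! p : ℝ, p ∈ Ioo 0 p₁ ∧ f p = 0) ∧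
    (∃! p : ℝ, p ∈ Ioo p₁ p₂ ∧ f p = 0) ∧
    (∃! p : ℝ, p ∈ Ioo p₂ 1 ∧ f p = 0) ∧
    (∀ p ∈ Ioo (0:ℝ) 1, f p = 0 → p ∈ Ioo 0 p₁ ∪ Ioo p₁ p₂ ∪ Ioo p₂ 1) := by
  obtain rfl : f = fun p => -log p - M / (N + p) - K := funext hf
  have hq : ∀ p, g p = M * p - (N + p) ^ 2 := fun p => by rw [hg]; ring
  have hfac := mul_sub_sq_eq_neg_mul_of_roots h12.ne ((hq p₁).symm.trans hg1)
    ((hq p₂).symm.trans hg2)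
  have hcont {c d : ℝ} (hc : 0 < c) : ContinuousOn (fun p => -log p - M / (N + p) - K) (Icc c d) :=
    (continuousOn_neg_log_sub_div_sub hN).mono fun x hx => hc.trans_le hx.1
  obtain ⟨a, hfa, ha0, hap⟩ : ∃ a, 0 < -log a - M / (N + a) - K ∧ a ∈ Ioo 0 p₁ :=
    (((tendsto_neg_log_sub_div_sub_nhdsGT_zero hN).eventually_gt_atTop 0).and
      (Ioo_mem_nhdsGT h0)).exists
  have hf_one : -log 1 - M / (N + 1) - K < 0 := by
    rw [log_one]; linarith [div_pos hM (by linarith : 0 < N + 1)]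
  refine ⟨?_, ?_, ?_, ?_⟩
  · refine existsUnique_zero_of_strictAntiOn ha0.le hap.le le_rfl (hcont ha0)
      (strictAntiOn_neg_log_sub_div_sub hN le_rfl fun x hx => ?_) hfa hf1
    rw [hfac, neg_neg_iff_pos]
    exact mul_pos_of_neg_of_neg (by linarith [hx.2]) (by linarith [hx.2])
  · refine existsUnique_zero_of_strictMonoOn le_rfl h12.le le_rfl (hcont h0)
      (strictMonoOn_neg_log_sub_div_sub hN h0.le fun x hx => ?_) hf1 hf2
    rw [hfac, neg_pos]
    exact mul_neg_of_pos_of_neg (by linarith [hx.1]) (by linarith [hx.2])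
  · refine existsUnique_zero_of_strictAntiOn le_rfl h21.le le_rfl (hcont (h0.trans h12))
      (strictAntiOn_neg_log_sub_div_sub hN (h0.trans h12).le fun x hx => ?_) hf2 hf_one
    rw [hfac, neg_neg_iff_pos]
    exact mul_pos (by linarith [hx.1]) (by linarith [hx.1])
  · rintro p ⟨hp0, hp1⟩ hfp
    have hne₁ : p ≠ p₁ := by rintro rfl; exact hf1.ne hfp
    have hne₂ : p ≠ p₂ := by rintro rfl; exact hf2.ne' hfp
    rcases hne₁.lt_or_gt with h | h
    · exact .inl (.inl ⟨hp0, h⟩)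
    rcases hne₂.lt_or_gt with h' | h'
    · exact .inl (.inr ⟨h, h'⟩)
    · exact .inr ⟨h', hp1⟩
end

section
/- Consider A_p(q,ξ,p) = 1/ξ + 2/(qp) - 1 where p = p(q,ξ) solves p = exp{-Lqξ/(ξ + pq(1-ξ)) - K}, L,K > 0, and fix q ∈ (0,1]. If L ≤ 1/(2q), then A_p (with p the stable root) is minimized over ξ ∈ (0,1] at ξ = 1, with minimum value (2/q)·exp{Lq + K}. -/
/-!
Write `t = Lqξ / (ξ + pq(1 - ξ))` for the exponent of the fixed-point equation and `s = Lq - t ≥ 0`.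
The equation gives `1/p = exp (t + K)`, and clearing denominators in the definition of `t` gives
`1/ξ - 1 = s / (t p q)`, so `A_p = (s/t + 2) / (pq)`, while `(2/q) exp (Lq + K) = 2 exp s / (pq)`.
It remains to show `2 t (exp s - 1) ≤ s`, which holds as soon as `t + s = Lq ≤ 1/2`.
-/

open Real Set

lemma two_mul_mul_exp_sub_one_le {s t : ℝ} (hs : 0 ≤ s) (hst : t + s ≤ 1 / 2) :
    2 * t * (exp s - 1) ≤ s := by
  have h_one_sub_mul_exp : (1 - s) * exp s ≤ 1 :=
    calc (1 - s) * exp s ≤ exp (-s) * exp s := by gcongr; linarith [add_one_le_exp (-s)]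
      _ = 1 := by rw [← exp_add, neg_add_cancel, exp_zero]
  have h_one_le_exp : 1 ≤ exp s := one_le_exp hs
  nlinarith

lemma two_div_mul_exp_le_peakAoI {L K q ξ p : ℝ} (hL : 0 < L) (hq : 0 < q) (hLq : L * q ≤ 1 / 2)
    (hξ : ξ ∈ Ioc (0 : ℝ) 1) (hp : 0 < p)
    (hfix : p = exp (-(L * q * ξ) / (ξ + p * q * (1 - ξ)) - K)) :
    2 / q * exp (L * q + K) ≤ 1 / ξ + 2 / (q * p) - 1 := by
  obtain ⟨hξ0, hξ1⟩ := hξ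
  have hD : 0 < ξ + p * q * (1 - ξ) := by nlinarith [mul_pos hp hq]
  set t := L * q * ξ / (ξ + p * q * (1 - ξ)) with ht_def
  have ht : 0 < t := by positivity
  have ht_mul : t * (ξ + p * q * (1 - ξ)) = L * q * ξ := div_mul_cancel₀ _ hD.ne'
  have ht_le : t ≤ L * q := by
    refine le_of_mul_le_mul_right ?_ hξ0
    nlinarith [mul_nonneg (mul_pos hp hq).le (sub_nonneg.2 hξ1)]
  have hp_exp : exp (L * q + K) = exp (L * q - t) / p := by
    rw [hfix, ← exp_sub]
    congr 1
    rw [ht_def]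
    ring
  clear_value t
  have hinv_sub : 1 / ξ - 1 = (L * q - t) / (t * p * q) := by
    field_simp
    linear_combination ht_mul
  have hkey : 2 * exp (L * q - t) ≤ (L * q - t) / t + 2 := by
    rw [div_add' _ _ _ ht.ne', le_div_iff₀ ht]
    have := two_mul_mul_exp_sub_one_le (sub_nonneg.2 ht_le) (show t + (L * q - t) ≤ 1 / 2 by linarith)
    nlinarith
  calc 2 / q * exp (L * q + K) = 2 * exp (L * q - t) / (p * q) := by
        rw [hp_exp]; field_simp
    _ ≤ ((L * q - t) / t + 2) / (p * q) := by gcongr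
    _ = 1 / ξ + 2 / (q * p) - 1 := by
        have : 1 / ξ + 2 / (q * p) - 1 = (1 / ξ - 1) + 2 / (q * p) := by ring
        rw [this, hinv_sub]
        field_simp

theorem stmt11_general (L K q : ℝ) (hL : 0 < L) (hq : q ∈ Ioc (0:ℝ) 1)
    (hLq : L ≤ 1 / (2 * q)) :
    (∀ ξ p : ℝ, ξ ∈ Ioc (0:ℝ) 1 → p ∈ Ioc (0:ℝ) 1 →
      p = Real.exp (-(L * q * ξ) / (ξ + p * q * (1 - ξ)) - K) →
      (2 / q) * Real.exp (L * q + K) ≤ 1 / ξ + 2 / (q * p) - 1) ∧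
    Real.exp (-(L * q + K))
      = Real.exp (-(L * q * 1) / (1 + Real.exp (-(L * q + K)) * q * (1 - 1)) - K) ∧
    1 / (1:ℝ) + 2 / (q * Real.exp (-(L * q + K))) - 1 = (2 / q) * Real.exp (L * q + K) := by
  have hq0 : 0 < q := hq.1
  have hLq' : L * q ≤ 1 / 2 := by
    rwa [le_div_iff₀ (by positivity), mul_comm 2, ← mul_assoc, ← le_div_iff₀ two_pos] at hLq
  refine ⟨fun ξ p hξ hp hfix => two_div_mul_exp_le_peakAoI hL hq0 hLq' hξ hp.1 hfix, ?_, ?_⟩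
  · norm_num [sub_eq_add_neg, add_comm]
  · rw [exp_neg]
    field_simp
    ring

theorem stmt11 (L K q : ℝ) (hL : 0 < L) (hK : 0 < K) (hq : q ∈ Ioc (0:ℝ) 1)
    (hLq : L ≤ 1 / (2 * q)) :
    (∀ ξ p : ℝ, ξ ∈ Ioc (0:ℝ) 1 → p ∈ Ioc (0:ℝ) 1 →
      p = Real.exp (-(L * q * ξ) / (ξ + p * q * (1 - ξ)) - K) →
      (2 / q) * Real.exp (L * q + K) ≤ 1 / ξ + 2 / (q * p) - 1) ∧
    Real.exp (-(L * q + K))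
      = Real.exp (-(L * q * 1) / (1 + Real.exp (-(L * q + K)) * q * (1 - 1)) - K) ∧
    1 / (1:ℝ) + 2 / (q * Real.exp (-(L * q + K))) - 1 = (2 / q) * Real.exp (L * q + K) :=
  stmt11_general L K q hL hq hLq
end

section
/- Fix q ∈ (0,1], L > 1/(2q), K > 0. The minimum over ξ ∈ (0,1) of A_p = 1/ξ + 2/(qp) - 1, with p the stable solution of p = exp{-Lqξ/(ξ + pq(1-ξ)) - K}, equals [qL(√(1 + 4/(qL)) + 1) + 2] / [2q·exp{-2/(√(1 + 4/(qL)) + 1) - K}], attained at ξ* = 2q·e^{-2/(√(1+4/(qL))+1) - K} / [qL(√(1+4/(qL))+1) + 2q·e^{-2/(√(1+4/(qL))+1) - K} - 2]. -/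
/-! Along a solution of the fixed-point equation put `t = L q ξ / (ξ + p q (1 - ξ))`, so that
`p = exp (-t - K)`. The constraint can then be solved for `ξ`, and the objective becomes
`(qL + t) e^t / t · e^K / q`, a function of `t > 0` alone. Its only critical point is the positive
root `t* = 2 / (√(1 + 4/(qL)) + 1)` of `t² + qL t = qL`, which is a global minimum because `e^t` lies
above its tangent line at `t*`. The minimiser `ξ*` is the `ξ` belonging to `t*`, and it lies in
`(0, 1)` exactly when `t* < qL`, i.e. when `qL > 1/2`. -/

open Real Set

noncomputable def criticalPoint (c : ℝ) : ℝ := 2 / (√(1 + 4 / c) + 1)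

section CriticalPoint

variable {c : ℝ}

lemma criticalPoint_pos (hc : 0 < c) : 0 < criticalPoint c := by
  unfold criticalPoint; positivity

lemma mul_sq_sqrt_one_add_four_div (hc : 0 < c) : c * √(1 + 4 / c) ^ 2 = c + 4 := by
  rw [sq_sqrt (by positivity)]; field_simp

lemma criticalPoint_sq_add_mul (hc : 0 < c) : criticalPoint c ^ 2 + c * criticalPoint c = c := by
  have hs := mul_sq_sqrt_one_add_four_div hc
  have hs0 : 0 ≤ √(1 + 4 / c) := sqrt_nonneg _
  unfold criticalPoint
  generalize √(1 + 4 / c) = s at *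
  field_simp
  nlinarith

lemma criticalPoint_lt_self (hc : 1 / 2 < c) : criticalPoint c < c := by
  have hc0 : 0 < c := by linarith
  have hs := mul_sq_sqrt_one_add_four_div hc0
  have hs0 : 0 ≤ √(1 + 4 / c) := sqrt_nonneg _
  unfold criticalPoint
  rw [div_lt_iff₀ (by positivity)]
  nlinarith [sq_nonneg (c * √(1 + 4 / c) - 2 + c), sq_nonneg (c * √(1 + 4 / c) + 2 - c)]

end CriticalPoint

lemma add_mul_exp_div_le_of_sq_add_mul_eq {c t₀ t : ℝ} (hc : 0 < c) (ht₀ : 0 < t₀)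
    (ht : 0 < t) (hroot : t₀ ^ 2 + c * t₀ = c) :
    (c + t₀) * exp t₀ / t₀ ≤ (c + t) * exp t / t := by
  have htangent : exp t₀ * (1 + (t - t₀)) ≤ exp t := by
    calc exp t₀ * (1 + (t - t₀)) ≤ exp t₀ * exp (t - t₀) := by
          gcongr; linarith [add_one_le_exp (t - t₀)]
      _ = exp t := by rw [← exp_add]; ring_nf
  have hpoly : (c + t₀) * t ≤ (c + t) * t₀ * (1 + (t - t₀)) := by
    nlinarith [mul_nonneg ht₀.le (sq_nonneg (t - t₀))]
  rw [div_le_div_iff₀ ht₀ ht]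
  calc (c + t₀) * exp t₀ * t = (c + t₀) * t * exp t₀ := by ring
    _ ≤ (c + t) * t₀ * (1 + (t - t₀)) * exp t₀ := by gcongr
    _ = (c + t) * t₀ * (exp t₀ * (1 + (t - t₀))) := by ring
    _ ≤ (c + t) * t₀ * exp t := by gcongr
    _ = (c + t) * exp t * t₀ := by ring

lemma add_div_mul_exp_le_of_sq_add_mul_eq {c q K t₀ t : ℝ} (hc : 0 < c) (hq : 0 < q)
    (ht₀ : 0 < t₀) (ht : 0 < t) (hroot : t₀ ^ 2 + c * t₀ = c) :
    (c + t₀) / (t₀ * q * exp (-t₀ - K)) ≤ (c + t) / (t * q * exp (-t - K)) := by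
  have hsplit : ∀ x, (c + x) / (x * q * exp (-x - K)) = (c + x) * exp x / x * (exp K / q) := by
    intro x
    rw [sub_eq_add_neg, exp_add, exp_neg, exp_neg]
    field_simp
  rw [hsplit, hsplit]
  gcongr ?_ * _
  exact add_mul_exp_div_le_of_sq_add_mul_eq hc ht₀ ht hroot

lemma one_div_add_two_div_sub_one_eq {c q ξ p t : ℝ} (hq : q ≠ 0) (hξ : ξ ≠ 0) (hp : p ≠ 0)
    (ht : t ≠ 0) (hrel : t * (ξ + p * q * (1 - ξ)) = c * ξ) :
    1 / ξ + 2 / (q * p) - 1 = (c + t) / (t * q * p) := by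
  field_simp
  linear_combination hrel

lemma mul_div_sub_add_mem_Ioo {c q p t : ℝ} (hq : 0 < q) (hp : 0 < p) (ht : 0 < t)
    (htc : t < c) : t * q * p / (c - t + t * q * p) ∈ Ioo 0 1 := by
  have hqp : 0 < t * q * p := by positivity
  refine ⟨by apply div_pos <;> linarith, ?_⟩
  rw [div_lt_one (by linarith)]
  linarith

lemma mul_add_mul_one_sub_eq {c q ξ p t : ℝ} (hden : c - t + t * q * p ≠ 0)
    (hξ : ξ = t * q * p / (c - t + t * q * p)) : t * (ξ + p * q * (1 - ξ)) = c * ξ := by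
  subst hξ
  field_simp
  ring

def SolvesFixedPoint (L K q ξ p : ℝ) : Prop :=
  p = exp (-(L * q * ξ) / (ξ + p * q * (1 - ξ)) - K)

section FixedPoint

variable {L K q ξ p t : ℝ}

lemma add_mul_mul_one_sub_pos (hq : 0 < q) (hξ : ξ ∈ Ioo 0 1) (hp : 0 < p) :
    0 < ξ + p * q * (1 - ξ) := by
  have : 0 < p * q * (1 - ξ) := mul_pos (mul_pos hp hq) (by linarith [hξ.2])
  linarith [hξ.1]

lemma SolvesFixedPoint.criticalPoint_le (hfix : SolvesFixedPoint L K q ξ p) (hq : 0 < q)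
    (hL : 0 < L) (hξ : ξ ∈ Ioo 0 1) (hp : 0 < p) :
    (q * L + criticalPoint (q * L)) /
        (criticalPoint (q * L) * q * exp (-criticalPoint (q * L) - K)) ≤
      1 / ξ + 2 / (q * p) - 1 := by
  have hc : 0 < q * L := mul_pos hq hL
  have hden := add_mul_mul_one_sub_pos hq hξ hp
  set t := L * q * ξ / (ξ + p * q * (1 - ξ)) with ht
  have htpos : 0 < t := div_pos (mul_pos (mul_pos hL hq) hξ.1) hden
  have hrel : t * (ξ + p * q * (1 - ξ)) = q * L * ξ := by
    rw [ht, div_mul_cancel₀ _ hden.ne']; ring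
  have hp' : p = exp (-t - K) := hfix.trans (by rw [neg_div])
  rw [one_div_add_two_div_sub_one_eq hq.ne' hξ.1.ne' hp.ne' htpos.ne' hrel, hp']
  exact add_div_mul_exp_le_of_sq_add_mul_eq hc hq (criticalPoint_pos hc) htpos
    (criticalPoint_sq_add_mul hc)

lemma solvesFixedPoint_of_eq_div (hq : 0 < q) (ht : 0 < t) (htc : t < q * L)
    (hp : p = exp (-t - K)) (hξ : ξ = t * q * p / (q * L - t + t * q * p)) :
    ξ ∈ Ioo 0 1 ∧ SolvesFixedPoint L K q ξ p ∧
      1 / ξ + 2 / (q * p) - 1 = (q * L + t) / (t * q * p) := by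
  have hp0 : 0 < p := hp ▸ exp_pos _
  have hD : 0 < q * L - t + t * q * p := by
    have : 0 < t * q * p := by positivity
    linarith
  have hξmem : ξ ∈ Ioo 0 1 := hξ ▸ mul_div_sub_add_mem_Ioo hq hp0 ht htc
  have hrel := mul_add_mul_one_sub_eq hD.ne' hξ
  refine ⟨hξmem, ?_, one_div_add_two_div_sub_one_eq hq.ne' hξmem.1.ne' hp0.ne' ht.ne' hrel⟩
  have hden := add_mul_mul_one_sub_pos hq hξmem hp0
  have ht' : L * q * ξ / (ξ + p * q * (1 - ξ)) = t := by
    rw [div_eq_iff hden.ne']; linear_combination -hrel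
  rw [SolvesFixedPoint, neg_div, ht', hp]

end FixedPoint

theorem stmt12 (L K q : ℝ) (hK : 0 < K) (hq : q ∈ Ioc (0:ℝ) 1)
    (hLq : 1 / (2 * q) < L) :
    let s := Real.sqrt (1 + 4 / (q * L));
    let V := (q * L * (s + 1) + 2) / (2 * q * Real.exp (-2 / (s + 1) - K));
    let ξs := 2 * q * Real.exp (-2 / (s + 1) - K) /
      (q * L * (s + 1) + 2 * q * Real.exp (-2 / (s + 1) - K) - 2);
    ξs ∈ Ioo (0:ℝ) 1 ∧
    (∀ ξ p : ℝ, ξ ∈ Ioo (0:ℝ) 1 → p ∈ Ioc (0:ℝ) 1 →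
      p = Real.exp (-(L * q * ξ) / (ξ + p * q * (1 - ξ)) - K) →
      V ≤ 1 / ξ + 2 / (q * p) - 1) ∧
    (∃ p ∈ Ioc (0:ℝ) 1,
      p = Real.exp (-(L * q * ξs) / (ξs + p * q * (1 - ξs)) - K) ∧
      1 / ξs + 2 / (q * p) - 1 = V) := by
  obtain ⟨hq0, -⟩ := hq
  have hc : 1 / 2 < q * L := by
    rw [div_lt_iff₀ (by positivity)] at hLq
    nlinarith
  have hc0 : 0 < q * L := by linarith
  have hL0 : 0 < L := lt_trans (by positivity) hLq
  intro s V ξs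
  set t₀ := criticalPoint (q * L)
  have ht₀pos : 0 < t₀ := criticalPoint_pos hc0
  have hs1 : 0 < s + 1 := by positivity
  have ht₀s : t₀ * (s + 1) = 2 := div_mul_cancel₀ _ hs1.ne'
  set E := exp (-t₀ - K) with hE
  have hE0 : 0 < E := exp_pos _
  have hs : exp (-2 / (s + 1) - K) = E := by rw [neg_div]; rfl
  have hD : 0 < q * L - t₀ + t₀ * q * E := by
    linarith [criticalPoint_lt_self hc, mul_pos (mul_pos ht₀pos hq0) hE0]
  have hV : V = (q * L + t₀) / (t₀ * q * E) := by
    simp only [V, hs]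
    rw [div_eq_div_iff (by positivity) (by positivity)]
    linear_combination q * q * L * E * ht₀s
  have hξs : ξs = t₀ * q * E / (q * L - t₀ + t₀ * q * E) := by
    have hden : q * L * (s + 1) + 2 * q * E - 2 = (s + 1) * (q * L - t₀ + t₀ * q * E) := by
      linear_combination (1 - q * E) * ht₀s
    simp only [ξs, hs]
    rw [hden, div_eq_div_iff (mul_pos hs1 hD).ne' hD.ne']
    linear_combination -(q * E * (q * L - t₀ + t₀ * q * E)) * ht₀s
  obtain ⟨hξsmem, hfixs, hvalue⟩ :=
    solvesFixedPoint_of_eq_div hq0 ht₀pos (criticalPoint_lt_self hc) hE hξs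
  refine ⟨hξsmem, fun ξ p hξ hp hfix ↦
    hV ▸ SolvesFixedPoint.criticalPoint_le hfix hq0 hL0 hξ hp.1,
    E, ⟨hE0, exp_le_one_iff.mpr (by linarith)⟩, hfixs, hvalue.trans hV.symm⟩
end

section
/- Define G(q) for q > 1/(2L) by G(q) = [qL(√(1 + 4/(qL)) + 1) + 2] / [2q·exp{-2/(√(1 + 4/(qL)) + 1) - K}] with L, K > 0. Substituting k = -2/(√(1 + 4/(qL)) + 1) ∈ (-1, -1/2), one has G(q) = 1/(q·e^k·e^{-K}(k+1)), k is strictly decreasing in q, the map k ↦ 1/(e^k(k+1)) is strictly decreasing on (-1, -1/2), and hence G is strictly decreasing in q on (1/(2L), ∞). -/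
open Real Set

lemma aux1 : StrictMonoOn (fun x : ℝ => Real.exp x * (x + 1)) (Set.Ioo (-1 : ℝ) (-1/2)) := by
  apply strictMonoOn_of_deriv_pos (convex_Ioo _ _) (by fun_prop)
  intro x hx
  rw [interior_Ioo] at hx
  have h : HasDerivAt (fun x : ℝ => Real.exp x * (x + 1))
      (Real.exp x * (x + 1) + Real.exp x * 1) x :=
    (Real.hasDerivAt_exp x).mul ((hasDerivAt_id x).add_const 1)
  rw [h.deriv]
  nlinarith [Real.exp_pos x, hx.1]

lemma aux2 : StrictAntiOn (fun x : ℝ => x ^ 2 * Real.exp x) (Set.Ioo (-1 : ℝ) (-1/2)) := by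
  apply strictAntiOn_of_deriv_neg (convex_Ioo _ _) (by fun_prop)
  intro x hx
  rw [interior_Ioo] at hx
  have h : HasDerivAt (fun x : ℝ => x ^ 2 * Real.exp x)
      ((2 : ℕ) * x ^ 1 * Real.exp x + x ^ 2 * Real.exp x) x :=
    (hasDerivAt_pow 2 x).mul (Real.hasDerivAt_exp x)
  rw [h.deriv]
  push_cast
  nlinarith [mul_pos (Real.exp_pos x)
      (mul_pos (show (0:ℝ) < -1/2 - x by linarith [hx.2])
        (show (0:ℝ) < x + 2 by linarith [hx.1])),
    mul_pos (Real.exp_pos x) (show (0:ℝ) < x/2 + 1 by linarith [hx.1])]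

lemma perq (L K q : ℝ) (hL : 0 < L) (hq : 1 / (2 * L) < q) :
    (-2 / (Real.sqrt (1 + 4 / (q * L)) + 1)) ∈ Ioo (-1 : ℝ) (-1/2) ∧
    (q * L * (Real.sqrt (1 + 4 / (q * L)) + 1) + 2) /
      (2 * q * Real.exp (-2 / (Real.sqrt (1 + 4 / (q * L)) + 1) - K)) =
    1 / (q * Real.exp (-2 / (Real.sqrt (1 + 4 / (q * L)) + 1)) * Real.exp (-K) *
      (-2 / (Real.sqrt (1 + 4 / (q * L)) + 1) + 1)) ∧
    q * L * ((-2 / (Real.sqrt (1 + 4 / (q * L)) + 1)) + 1) =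
      (-2 / (Real.sqrt (1 + 4 / (q * L)) + 1)) ^ 2 := by
  have h2L : 0 < 1 / (2 * L) := by positivity
  have hq0 : 0 < q := lt_trans h2L hq
  have hqL : 1 / 2 < q * L := by
    rw [div_lt_iff₀ (by positivity)] at hq
    nlinarith
  have hqL0 : 0 < q * L := by positivity
  set s := Real.sqrt (1 + 4 / (q * L)) with hs
  have hs2 : s ^ 2 = 1 + 4 / (q * L) := Real.sq_sqrt (by positivity)
  have hsn : 0 ≤ s := Real.sqrt_nonneg _
  have hs1 : 1 < s := by nlinarith [div_pos (by norm_num : (0:ℝ) < 4) hqL0]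
  have hs3 : s < 3 := by
    have h8 : 4 / (q * L) < 8 := by rw [div_lt_iff₀ hqL0]; nlinarith
    nlinarith
  have hsp : 0 < s + 1 := by linarith
  have hs2' : q * L * s ^ 2 = q * L + 4 := by
    rw [hs2]; field_simp
  have hmem : (-2 / (s + 1)) ∈ Ioo (-1 : ℝ) (-1/2) := by
    constructor
    · rw [lt_div_iff₀ hsp]; linarith
    · rw [div_lt_iff₀ hsp]; nlinarith
  have hk2 : q * L * ((-2 / (s + 1)) + 1) = (-2 / (s + 1)) ^ 2 := by
    field_simp
    ring_nf
    nlinarith [hs2']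
  refine ⟨hmem, ?_, hk2⟩
  have hE : Real.exp (-2 / (s + 1)) * Real.exp (-K) = Real.exp (-2 / (s + 1) - K) := by
    rw [← Real.exp_add]; ring_nf
  rw [mul_assoc q (Real.exp (-2 / (s + 1))) (Real.exp (-K)), hE]
  have hEpos : 0 < Real.exp (-2 / (s + 1) - K) := Real.exp_pos _
  have hc : 0 < -2 / (s + 1) + 1 := by linarith [hmem.1]
  rw [div_eq_div_iff (by positivity) (by positivity)]
  have key : (q * L * (s + 1) + 2) * (-2 / (s + 1) + 1) = 2 := by
    field_simp
    ring_nf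
    nlinarith [hs2']
  linear_combination (q * Real.exp (-2 / (s + 1) - K)) * key

theorem stmt14 (L K : ℝ) (hL : 0 < L) (hK : 0 < K) :
    let k := fun q : ℝ => -2 / (Real.sqrt (1 + 4 / (q * L)) + 1);
    let G := fun q : ℝ => (q * L * (Real.sqrt (1 + 4 / (q * L)) + 1) + 2) /
      (2 * q * Real.exp (-2 / (Real.sqrt (1 + 4 / (q * L)) + 1) - K));
    (∀ q : ℝ, 1 / (2 * L) < q →
      k q ∈ Ioo (-1 : ℝ) (-1 / 2) ∧
      G q = 1 / (q * Real.exp (k q) * Real.exp (-K) * (k q + 1))) ∧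
    StrictAntiOn k (Ioi (1 / (2 * L))) ∧
    StrictAntiOn (fun x : ℝ => 1 / (Real.exp x * (x + 1))) (Ioo (-1 : ℝ) (-1 / 2)) ∧
    StrictAntiOn G (Ioi (1 / (2 * L))) := by
  intro k G
  have h2L : 0 < 1 / (2 * L) := by positivity
  have hkdef : ∀ q : ℝ, k q = -2 / (Real.sqrt (1 + 4 / (q * L)) + 1) := fun q => rfl
  have hGdef : ∀ q : ℝ, G q = (q * L * (Real.sqrt (1 + 4 / (q * L)) + 1) + 2) /
      (2 * q * Real.exp (-2 / (Real.sqrt (1 + 4 / (q * L)) + 1) - K)) := fun q => rfl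
  have hpart1 : ∀ q : ℝ, 1 / (2 * L) < q →
      k q ∈ Ioo (-1 : ℝ) (-1 / 2) ∧
      G q = 1 / (q * Real.exp (k q) * Real.exp (-K) * (k q + 1)) := by
    intro q hq
    obtain ⟨h1, h2, _⟩ := perq L K q hL hq
    refine ⟨?_, ?_⟩
    · rw [hkdef]; exact h1
    · rw [hGdef, hkdef]; exact h2
  have hkanti : StrictAntiOn k (Ioi (1 / (2 * L))) := by
    intro p hp q hq hpq
    simp only [mem_Ioi] at hp hq
    have hp0 : 0 < p := lt_trans h2L hp
    have hq0 : 0 < q := lt_trans h2L hq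
    rw [hkdef, hkdef]
    have hlt : 4 / (q * L) < 4 / (p * L) := by
      apply div_lt_div_of_pos_left (by norm_num) (by positivity)
      nlinarith
    have hsq : Real.sqrt (1 + 4 / (q * L)) < Real.sqrt (1 + 4 / (p * L)) :=
      Real.sqrt_lt_sqrt (by positivity) (by linarith)
    have hq1 : 0 < Real.sqrt (1 + 4 / (q * L)) + 1 := by positivity
    have : 2 / (Real.sqrt (1 + 4 / (p * L)) + 1) < 2 / (Real.sqrt (1 + 4 / (q * L)) + 1) :=
      div_lt_div_of_pos_left (by norm_num) hq1 (by linarith)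
    rw [neg_div, neg_div]
    linarith
  have hhanti : StrictAntiOn (fun x : ℝ => 1 / (Real.exp x * (x + 1))) (Ioo (-1 : ℝ) (-1 / 2)) := by
    intro a ha b hb hab
    have ha' : a ∈ Ioo (-1 : ℝ) (-1/2) := by simpa using ha
    have hb' : b ∈ Ioo (-1 : ℝ) (-1/2) := by simpa using hb
    have := aux1 ha' hb' hab
    have hpa : 0 < Real.exp a * (a + 1) := by
      have := ha'.1
      have := Real.exp_pos a
      nlinarith
    exact one_div_lt_one_div_of_lt hpa this
  refine ⟨hpart1, hkanti, hhanti, ?_⟩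
  have hrep : ∀ q : ℝ, 1 / (2 * L) < q →
      G q = L / ((k q) ^ 2 * Real.exp (k q) * Real.exp (-K)) := by
    intro q hq
    obtain ⟨h1, h2, h3⟩ := perq L K q hL hq
    have hq0 : 0 < q := lt_trans h2L hq
    have hk1 : 0 < -2 / (Real.sqrt (1 + 4 / (q * L)) + 1) + 1 := by linarith [h1.1]
    have hkne : -2 / (Real.sqrt (1 + 4 / (q * L)) + 1) ≠ 0 := by
      have h12 := h1.2; intro h; rw [h] at h12; norm_num at h12
    rw [hGdef, hkdef, h2]
    have hEq : 0 < Real.exp (-2 / (Real.sqrt (1 + 4 / (q * L)) + 1)) := Real.exp_pos _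
    have hEK : 0 < Real.exp (-K) := Real.exp_pos _
    rw [div_eq_div_iff (by positivity) (by positivity)]
    linear_combination (-(Real.exp (-2 / (Real.sqrt (1 + 4 / (q * L)) + 1)) * Real.exp (-K))) * h3
  intro p hp q hq hpq
  simp only [mem_Ioi] at hp hq
  rw [hrep p hp, hrep q hq]
  have hkp := (perq L K p hL hp).1
  have hkq := (perq L K q hL hq).1
  have hkp' : k p ∈ Ioo (-1:ℝ) (-1/2) := by rw [hkdef]; exact hkp
  have hkq' : k q ∈ Ioo (-1:ℝ) (-1/2) := by rw [hkdef]; exact hkq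
  have hlt : k q < k p := hkanti (mem_Ioi.mpr hp) (mem_Ioi.mpr hq) hpq
  have hmono := aux2 hkq' hkp' hlt
  simp only at hmono
  have hkpne : k p ≠ 0 := by have := hkp'.2; intro h; rw [h] at this; norm_num at this
  have hkqne : k q ≠ 0 := by have := hkq'.2; intro h; rw [h] at this; norm_num at this
  have hEK : 0 < Real.exp (-K) := Real.exp_pos _
  have hmono' : (k p) ^ 2 * Real.exp (k p) * Real.exp (-K) <
      (k q) ^ 2 * Real.exp (k q) * Real.exp (-K) :=
    mul_lt_mul_of_pos_right hmono hEK
  apply div_lt_div_of_pos_left hL _ hmono'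
  positivity
end

section
/- The function q ↦ A_p^{ξ=ξ*_q} given piecewise by (2/q)e^{Lq+K} for qL ≤ 1/2 and [qL(√(1+4/(qL))+1)+2]/(2q·e^{-2/(√(1+4/(qL))+1)-K}) for qL > 1/2 is continuous at q = 1/(2L) and strictly decreasing on (0,1]; hence its minimum over q ∈ (0,1] is attained at q = 1. -/
/-!
Both branches are rescalings of `φₙ(x) = eˣ / xⁿ`, which is strictly decreasing on `(0, n]`
because `log (b / a) > (b - a) / b ≥ (b - a) / n` for `0 < a < b ≤ n`. The left branch is
`2 L e^K · φ₁(qL)` with `qL ≤ 1/2`; with `m = 2 / (√(1 + 4/(qL)) + 1) ∈ (0, 2]`, which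
increases with `q`, the right branch is `L e^K · φ₂(m)`. At `qL = 1/2` we have `m = 1/2` and
both branches equal `4 L e^{1/2 + K}`, so the glued function is continuous there and strictly
decreasing on all of `q > 0`.
-/

open Real Set

theorem strictAntiOn_exp_div_pow (n : ℕ) :
    StrictAntiOn (fun x : ℝ => exp x / x ^ n) (Ioc 0 n) := by
  rintro a ⟨ha, -⟩ b ⟨hb, hbn⟩ hab
  have hn : (0 : ℝ) < n := hb.trans_le hbn
  have hlog : (b - a) / b < log (b / a) := by
    have := log_lt_sub_one_of_pos (div_pos ha hb) (div_ne_one_of_ne hab.ne)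
    rw [log_div ha.ne' hb.ne'] at this
    rw [log_div hb.ne' ha.ne', sub_div, div_self hb.ne']
    linarith
  have hexp : exp (b - a) < (b / a) ^ n := by
    rw [← exp_log (div_pos hb ha), ← exp_nat_mul, exp_lt_exp]
    calc b - a ≤ n * ((b - a) / b) := by
          rw [mul_div_assoc', le_div_iff₀ hb]; nlinarith
      _ < n * log (b / a) := mul_lt_mul_of_pos_left hlog hn
  rw [div_lt_div_iff₀ (by positivity) (by positivity)]
  calc exp b * a ^ n = exp a * (exp (b - a) * a ^ n) := by
        rw [← mul_assoc, ← exp_add, add_sub_cancel]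
    _ < exp a * ((b / a) ^ n * a ^ n) :=
        mul_lt_mul_of_pos_left (mul_lt_mul_of_pos_right hexp (pow_pos ha n)) (exp_pos a)
    _ = exp a * b ^ n := by rw [← mul_pow, div_mul_cancel₀ _ ha.ne']

section Piecewise

variable {α β : Type*} [LinearOrder α] {f g : α → β} {a c : α}

theorem eqOn_if_le_left : EqOn (fun x => if x ≤ c then f x else g x) f (Iic c) :=
  fun _ hx => if_pos hx

theorem eqOn_if_le_right (hfg : f c = g c) :
    EqOn (fun x => if x ≤ c then f x else g x) g (Ici c) := by
  intro x hx
  dsimp only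
  split_ifs with h
  · rw [le_antisymm h hx, hfg]
  · rfl

theorem continuousAt_if_le [TopologicalSpace α] [TopologicalSpace β] (hf : ContinuousAt f c)
    (hg : ContinuousAt g c) (hfg : f c = g c) :
    ContinuousAt (fun x => if x ≤ c then f x else g x) c := by
  rw [← continuousWithinAt_univ, ← Iic_union_Ici (a := c)]
  exact (hf.continuousWithinAt.congr eqOn_if_le_left (eqOn_if_le_left self_mem_Iic)).union
    (hg.continuousWithinAt.congr (eqOn_if_le_right hfg) (eqOn_if_le_right hfg self_mem_Ici))

theorem strictAntiOn_if_le [Preorder β] (hac : a < c) (hf : StrictAntiOn f (Ioc a c))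
    (hg : StrictAntiOn g (Ici c)) (hfg : f c = g c) :
    StrictAntiOn (fun x => if x ≤ c then f x else g x) (Ioi a) := by
  rw [← Ioc_union_Ici_eq_Ioi hac]
  exact (hf.congr fun x hx => (eqOn_if_le_left hx.2).symm).union
    (hg.congr (eqOn_if_le_right hfg).symm) ⟨right_mem_Ioc.2 hac, fun x hx => hx.2⟩ isLeast_Ici

end Piecewise

noncomputable def peakAoILeft (L K q : ℝ) : ℝ := 2 / q * exp (L * q + K)

noncomputable def peakAoIRight (L K q : ℝ) : ℝ :=
  (q * L * (√(1 + 4 / (q * L)) + 1) + 2) / (2 * q * exp (-2 / (√(1 + 4 / (q * L)) + 1) - K))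

noncomputable def peakAoIExponent (L q : ℝ) : ℝ := 2 / (√(1 + 4 / (q * L)) + 1)

theorem peakAoILeft_eq (K : ℝ) {L q : ℝ} (hL : L ≠ 0) (hq : q ≠ 0) :
    peakAoILeft L K q = 2 * L * exp K * (exp (L * q) / (L * q)) := by
  rw [peakAoILeft, exp_add]
  field_simp

theorem peakAoILeft_strictAntiOn (K : ℝ) {L : ℝ} (hL : 0 < L) :
    StrictAntiOn (peakAoILeft L K) (Ioc 0 L⁻¹) := by
  have hmaps : MapsTo (L * ·) (Ioc 0 L⁻¹) (Ioc 0 1) := fun q hq =>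
    ⟨mul_pos hL hq.1,
      (mul_le_mul_of_nonneg_left hq.2 hL.le).trans_eq (mul_inv_cancel₀ hL.ne')⟩
  have hexp : StrictAntiOn (fun x : ℝ => exp x / x) (Ioc 0 1) := by
    simpa using strictAntiOn_exp_div_pow 1
  intro a ha b hb hab
  rw [peakAoILeft_eq K hL.ne' ha.1.ne', peakAoILeft_eq K hL.ne' hb.1.ne']
  exact mul_lt_mul_of_pos_left (hexp (hmaps ha) (hmaps hb) (mul_lt_mul_of_pos_left hab hL))
    (by positivity)

theorem peakAoIExponent_mem_Ioc (L q : ℝ) : peakAoIExponent L q ∈ Ioc 0 2 := by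
  have hs := sqrt_nonneg (1 + 4 / (q * L))
  exact ⟨by unfold peakAoIExponent; positivity,
    div_le_of_le_mul₀ (by positivity) zero_le_two (by linarith)⟩

theorem peakAoIExponent_strictMonoOn {L : ℝ} (hL : 0 < L) :
    StrictMonoOn (peakAoIExponent L) (Ioi 0) := by
  intro a (ha : 0 < a) b (hb : 0 < b) hab
  have hsqrt : √(1 + 4 / (b * L)) < √(1 + 4 / (a * L)) := by gcongr
  exact div_lt_div_of_pos_left two_pos (by positivity) (by linarith)

theorem peakAoIExponent_of_mul_eq_half {L q : ℝ} (h : q * L = 1 / 2) :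
    peakAoIExponent L q = 1 / 2 := by
  rw [peakAoIExponent, h, show (1 : ℝ) + 4 / (1 / 2) = 3 ^ 2 by norm_num, sqrt_sq (by norm_num)]
  norm_num

theorem peakAoIRight_eq (K : ℝ) {L q : ℝ} (hL : 0 < L) (hq : 0 < q) :
    peakAoIRight L K q = L * exp K * (exp (peakAoIExponent L q) / peakAoIExponent L q ^ 2) := by
  rw [peakAoIRight, peakAoIExponent, neg_div, sub_eq_add_neg, ← neg_add, exp_neg, exp_add]
  set s := √(1 + 4 / (q * L)) with hs
  have hsq : q * L * s ^ 2 = q * L + 4 := by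
    rw [hs, sq_sqrt (by positivity)]
    field_simp
  field_simp
  linear_combination -hsq

theorem peakAoIRight_strictAntiOn (K : ℝ) {L : ℝ} (hL : 0 < L) :
    StrictAntiOn (peakAoIRight L K) (Ioi 0) := by
  have hexp : StrictAntiOn (fun x : ℝ => exp x / x ^ 2) (Ioc 0 2) := by
    simpa using strictAntiOn_exp_div_pow 2
  intro a ha b hb hab
  rw [peakAoIRight_eq K hL ha, peakAoIRight_eq K hL hb]
  exact mul_lt_mul_of_pos_left (hexp (peakAoIExponent_mem_Ioc L a) (peakAoIExponent_mem_Ioc L b)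
    (peakAoIExponent_strictMonoOn hL ha hb hab)) (by positivity)

theorem peakAoILeft_eq_peakAoIRight_of_mul_eq_half (K : ℝ) {L q : ℝ} (hL : 0 < L)
    (h : q * L = 1 / 2) : peakAoILeft L K q = peakAoIRight L K q := by
  have hq : 0 < q := pos_of_mul_pos_left (h ▸ one_half_pos) hL.le
  rw [peakAoILeft_eq K hL.ne' hq.ne', peakAoIRight_eq K hL hq, peakAoIExponent_of_mul_eq_half h,
    mul_comm L q, h]
  ring

theorem continuousAt_peakAoILeft (L K : ℝ) {q : ℝ} (hq : q ≠ 0) :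
    ContinuousAt (peakAoILeft L K) q := by
  unfold peakAoILeft
  fun_prop (disch := exact hq)

theorem continuousAt_peakAoIRight (K : ℝ) {L q : ℝ} (hL : 0 < L) (hq : 0 < q) :
    ContinuousAt (peakAoIRight L K) q := by
  unfold peakAoIRight
  fun_prop (disch := positivity)

theorem stmt15_general (L K : ℝ) (hL : 0 < L) :
    let F := fun q : ℝ =>
      if q * L ≤ 1 / 2 then 2 / q * Real.exp (L * q + K)
      else (q * L * (Real.sqrt (1 + 4 / (q * L)) + 1) + 2) /
        (2 * q * Real.exp (-2 / (Real.sqrt (1 + 4 / (q * L)) + 1) - K));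
    ContinuousAt F (1 / (2 * L)) ∧
    StrictAntiOn F (Ioc (0:ℝ) 1) ∧
    ∀ q ∈ Ioc (0:ℝ) 1, F 1 ≤ F q := by
  intro F
  have hq₀ : 0 < 1 / (2 * L) := by positivity
  have hF : F = fun q => if q ≤ 1 / (2 * L) then peakAoILeft L K q else peakAoIRight L K q := by
    funext q
    refine if_congr ?_ rfl rfl
    conv_rhs => rw [le_div_iff₀ (by positivity)]
    constructor <;> intro h <;> linarith
  have hjoin : peakAoILeft L K (1 / (2 * L)) = peakAoIRight L K (1 / (2 * L)) :=
    peakAoILeft_eq_peakAoIRight_of_mul_eq_half K hL (by field_simp)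
  have hanti : StrictAntiOn F (Ioi 0) := by
    rw [hF]
    refine strictAntiOn_if_le hq₀ ((peakAoILeft_strictAntiOn K hL).mono (Ioc_subset_Ioc_right ?_))
      ((peakAoIRight_strictAntiOn K hL).mono (Ici_subset_Ioi.2 hq₀)) hjoin
    rw [one_div, inv_le_inv₀ (by positivity) hL]
    linarith
  refine ⟨?_, hanti.mono Ioc_subset_Ioi_self,
    fun q hq => hanti.antitoneOn hq.1 (mem_Ioi.2 one_pos) hq.2⟩
  rw [hF]
  exact continuousAt_if_le (continuousAt_peakAoILeft L K hq₀.ne')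
    (continuousAt_peakAoIRight K hL hq₀) hjoin

theorem stmt15 (L K : ℝ) (hL : 0 < L) (hK : 0 < K) :
    let F := fun q : ℝ =>
      if q * L ≤ 1 / 2 then 2 / q * Real.exp (L * q + K)
      else (q * L * (Real.sqrt (1 + 4 / (q * L)) + 1) + 2) /
        (2 * q * Real.exp (-2 / (Real.sqrt (1 + 4 / (q * L)) + 1) - K));
    ContinuousAt F (1 / (2 * L)) ∧
    StrictAntiOn F (Ioc (0:ℝ) 1) ∧
    ∀ q ∈ Ioc (0:ℝ) 1, F 1 ≤ F q :=
  stmt15_general L K hL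
end

section
/- For L ≤ 1/2 and K > 0, the jointly optimal peak AoI is A_p* = 2·exp{L + K}, attained at q* = 1 and ξ* = 1; for L > 1/2, A_p* = [L(√(1+4/L)+1)+2]/(2·exp{-2/(√(1+4/L)+1) - K}), attained at q* = 1 and ξ* = 2e^{-2/(√(1+4/L)+1)-K}/[L(√(1+4/L)+1) + 2e^{-2/(√(1+4/L)+1)-K} - 2]. -/
/-!
Along the fixed point, the effective load `T = Lqξ / (ξ + pq(1-ξ))` satisfies `p = e^{-(T+K)}`
and `0 < T ≤ Lq ≤ L`, and the objective rewrites as `L/(Tp) + 1/(qp)`. Hence it is at least its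
value `e^{T+K} (L + T) / T` at `q = 1`, a one-variable function of `T` that decreases up to the
positive root `T₀ = 2/(√(1+4/L)+1)` of `T² + LT = L` and increases after it. For `L ≤ 1/2` we have
`L ≤ T₀`, so the minimum over `(0, L]` is at `T = L`, i.e. `ξ = 1`; for `L > 1/2` it is at `T₀`,
reached with `q = 1` by the `ξ` solving `Lξ = T₀ (ξ + p(1-ξ))`.
-/

open Real Set

noncomputable def peakAoIAtLoad (L K T : ℝ) : ℝ := exp (T + K) * (L + T) / T

lemma peakAoIAtLoad_eq_div_add_div (L K : ℝ) {T : ℝ} (hT : T ≠ 0) :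
    peakAoIAtLoad L K T = L / (T * exp (-(T + K))) + 1 / exp (-(T + K)) := by
  rw [peakAoIAtLoad, exp_neg]
  field_simp

lemma peakAoIAtLoad_self (K : ℝ) {L : ℝ} (hL : L ≠ 0) : peakAoIAtLoad L K L = 2 * exp (L + K) := by
  rw [peakAoIAtLoad]
  field_simp
  ring

lemma peakAoI_eq_of_load {L q ξ p T : ℝ} (hξ : ξ ≠ 0) (hq : q ≠ 0) (hp : p ≠ 0) (hT : T ≠ 0)
    (hload : T * (ξ + p * q * (1 - ξ)) = L * q * ξ) :
    1 / ξ + 2 / (q * p) - 1 = L / (T * p) + 1 / (q * p) := by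
  field_simp
  linear_combination hload

lemma exists_peakAoIAtLoad_le_of_fixedPoint {L K q ξ p : ℝ} (hL : 0 < L)
    (hq : q ∈ Ioc (0:ℝ) 1) (hξ : ξ ∈ Ioc (0:ℝ) 1) (hp0 : 0 < p)
    (hfix : p = exp (-(L * q * ξ) / (ξ + p * q * (1 - ξ)) - K)) :
    ∃ T ∈ Ioc 0 L, peakAoIAtLoad L K T ≤ 1 / ξ + 2 / (q * p) - 1 := by
  obtain ⟨hq0, hq1⟩ := hq
  obtain ⟨hξ0, hξ1⟩ := hξ
  obtain ⟨D, hD⟩ : ∃ D, D = ξ + p * q * (1 - ξ) := ⟨_, rfl⟩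
  have hξD : ξ ≤ D := by
    rw [hD]
    exact le_add_of_nonneg_right (mul_nonneg (by positivity) (by linarith))
  have hD0 : 0 < D := hξ0.trans_le hξD
  obtain ⟨T, hT⟩ : ∃ T, T = L * q * ξ / D := ⟨_, rfl⟩
  have hT0 : 0 < T := hT ▸ by positivity
  have hload : T * D = L * q * ξ := by rw [hT, div_mul_cancel₀ _ hD0.ne']
  have hpT : p = exp (-(T + K)) := by
    rw [hfix, ← hD, hT]
    ring_nf
  refine ⟨T, ⟨hT0, ?_⟩, ?_⟩
  · rw [hT, div_le_iff₀ hD0]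
    nlinarith [mul_le_mul_of_nonneg_left hq1 (mul_pos hL hξ0).le]
  calc peakAoIAtLoad L K T = L / (T * p) + 1 / p := by
        rw [peakAoIAtLoad_eq_div_add_div L K hT0.ne', ← hpT]
    _ ≤ L / (T * p) + 1 / (q * p) := by
        gcongr
        exact mul_le_of_le_one_left hp0.le hq1
    _ = 1 / ξ + 2 / (q * p) - 1 :=
        (peakAoI_eq_of_load hξ0.ne' hq0.ne' hp0.ne' hT0.ne' (hD ▸ hload)).symm

/-- `exp` lies above its tangent at `T₀ + K`, which reduces the comparison to
`(L + T₀) T ≤ (T - T₀ + 1) (L + T) T₀`; the difference of the two sides is the product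
in `hsign`. -/
lemma peakAoIAtLoad_le_of_sign {L K T₀ T : ℝ} (hT₀ : 0 < T₀) (hT : 0 < T) (hLT : 0 ≤ L + T)
    (hsign : 0 ≤ (T - T₀) * (T₀ * (L + T) - L)) :
    peakAoIAtLoad L K T₀ ≤ peakAoIAtLoad L K T := by
  have htangent : exp (T₀ + K) * (T - T₀ + 1) ≤ exp (T + K) :=
    calc exp (T₀ + K) * (T - T₀ + 1) ≤ exp (T₀ + K) * exp (T - T₀) := by
          gcongr
          exact add_one_le_exp _
      _ = exp (T + K) := by rw [← exp_add]; ring_nf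
  have hpoly : (L + T₀) * T ≤ (T - T₀ + 1) * ((L + T) * T₀) := by
    linear_combination hsign
  rw [peakAoIAtLoad, peakAoIAtLoad, div_le_div_iff₀ hT₀ hT]
  calc exp (T₀ + K) * (L + T₀) * T ≤ exp (T₀ + K) * (T - T₀ + 1) * ((L + T) * T₀) := by
        rw [mul_assoc, mul_assoc]
        gcongr
    _ ≤ exp (T + K) * ((L + T) * T₀) := by gcongr
    _ = exp (T + K) * (L + T) * T₀ := by ring

lemma peakAoIAtLoad_le_of_mul_add_eq {L K T₀ T : ℝ} (hL : 0 ≤ L) (hT₀ : 0 < T₀) (hT : 0 < T)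
    (hT₀L : T₀ * (L + T₀) = L) :
    peakAoIAtLoad L K T₀ ≤ peakAoIAtLoad L K T := by
  refine peakAoIAtLoad_le_of_sign hT₀ hT (by linarith) ?_
  have hsq : (T - T₀) * (T₀ * (L + T) - L) = T₀ * (T - T₀) ^ 2 := by
    linear_combination (T - T₀) * hT₀L
  rw [hsq]
  positivity

lemma peakAoIAtLoad_self_le {L K T : ℝ} (hL : 0 < L) (hL2 : L ≤ 1 / 2) (hT : 0 < T)
    (hTL : T ≤ L) : peakAoIAtLoad L K L ≤ peakAoIAtLoad L K T :=
  peakAoIAtLoad_le_of_sign hL hT (by linarith)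
    (mul_nonneg_of_nonpos_of_nonpos (by linarith) (by nlinarith))

lemma fixedPoint_of_load {L K T p ξ : ℝ} (hK : 0 ≤ K) (hT : 0 < T) (hTL : T < L)
    (hp : p = exp (-(T + K))) (hξ : ξ = T * p / (L - T + T * p)) :
    ξ ∈ Ioo (0:ℝ) 1 ∧ p ∈ Ioc (0:ℝ) 1 ∧
      p = exp (-(L * 1 * ξ) / (ξ + p * 1 * (1 - ξ)) - K) ∧
      1 / ξ + 2 / (1 * p) - 1 = peakAoIAtLoad L K T := by
  have hL : 0 < L := hT.trans hTL
  have hp0 : 0 < p := hp ▸ exp_pos _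
  have hp1 : p ≤ 1 := hp ▸ exp_le_one_iff.2 (by linarith)
  have hE : 0 < L - T + T * p := by nlinarith
  have hξ0 : 0 < ξ := hξ ▸ by positivity
  have hload : T * (ξ + p * 1 * (1 - ξ)) = L * 1 * ξ := by
    rw [hξ]
    field_simp
    ring
  have hden : 0 < ξ + p * 1 * (1 - ξ) := (mul_pos_iff_of_pos_left hT).1 (hload ▸ by positivity)
  refine ⟨⟨hξ0, by rw [hξ, div_lt_one hE]; linarith⟩, ⟨hp0, hp1⟩, ?_, ?_⟩
  · rw [← hload, neg_div, mul_div_cancel_right₀ _ hden.ne', hp, neg_add']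
  · rw [peakAoI_eq_of_load hξ0.ne' one_ne_zero hp0.ne' hT.ne' hload,
      peakAoIAtLoad_eq_div_add_div L K hT.ne', hp, one_mul]

lemma two_div_sqrt_add_one_mul {L : ℝ} (hL : 0 < L) :
    2 / (√(1 + 4 / L) + 1) * (L + 2 / (√(1 + 4 / L) + 1)) = L := by
  have hs : L * √(1 + 4 / L) ^ 2 = L + 4 := by
    rw [sq_sqrt (by positivity)]
    field_simp
  have hs0 : 0 ≤ √(1 + 4 / L) := sqrt_nonneg _
  generalize √(1 + 4 / L) = s at hs hs0 ⊢
  field_simp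
  linear_combination -hs

lemma closedForm_eq_of_two_div (L K : ℝ) {s : ℝ} (hs : 0 ≤ s) :
    (L * (s + 1) + 2) / (2 * exp (-2 / (s + 1) - K)) = peakAoIAtLoad L K (2 / (s + 1)) ∧
      2 * exp (-2 / (s + 1) - K) / (L * (s + 1) + 2 * exp (-2 / (s + 1) - K) - 2) =
        2 / (s + 1) * exp (-(2 / (s + 1) + K)) /
          (L - 2 / (s + 1) + 2 / (s + 1) * exp (-(2 / (s + 1) + K))) := by
  obtain ⟨T₀, hT₀⟩ : ∃ T₀, T₀ = 2 / (s + 1) := ⟨_, rfl⟩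
  obtain ⟨p₀, hp₀⟩ : ∃ p₀, p₀ = exp (-(T₀ + K)) := ⟨_, rfl⟩
  have hp₀pos : 0 < p₀ := hp₀ ▸ exp_pos _
  have hexp : exp (-2 / (s + 1) - K) = p₀ := by rw [hp₀, hT₀]; ring_nf
  have hs1 : 0 < s + 1 := by positivity
  have hT₀pos : 0 < T₀ := hT₀ ▸ by positivity
  have hT₀s : T₀ * (s + 1) = 2 := by rw [hT₀, div_mul_cancel₀ _ hs1.ne']
  rw [← hT₀, ← hp₀, hexp, peakAoIAtLoad_eq_div_add_div L K hT₀pos.ne', ← hp₀]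
  constructor
  · field_simp
    linear_combination L * hT₀s
  · rw [← mul_div_mul_right (T₀ * p₀) _ hs1.ne']
    congr 1
    · linear_combination -p₀ * hT₀s
    · linear_combination (1 - p₀) * hT₀s

theorem stmt16 (L K : ℝ) (hL : 0 < L) (hK : 0 < K) :
    (L ≤ 1 / 2 →
      (∀ q ξ p : ℝ, q ∈ Ioc (0:ℝ) 1 → ξ ∈ Ioc (0:ℝ) 1 → p ∈ Ioc (0:ℝ) 1 →
        p = Real.exp (-(L * q * ξ) / (ξ + p * q * (1 - ξ)) - K) →
        2 * Real.exp (L + K) ≤ 1 / ξ + 2 / (q * p) - 1) ∧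
      Real.exp (-(L + K))
        = Real.exp (-(L * 1 * 1) / (1 + Real.exp (-(L + K)) * 1 * (1 - 1)) - K) ∧
      1 / (1:ℝ) + 2 / (1 * Real.exp (-(L + K))) - 1 = 2 * Real.exp (L + K)) ∧
    (1 / 2 < L →
      let s := Real.sqrt (1 + 4 / L);
      let V := (L * (s + 1) + 2) / (2 * Real.exp (-2 / (s + 1) - K));
      let ξs := 2 * Real.exp (-2 / (s + 1) - K) /
        (L * (s + 1) + 2 * Real.exp (-2 / (s + 1) - K) - 2);
      ξs ∈ Ioo (0:ℝ) 1 ∧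
      (∀ q ξ p : ℝ, q ∈ Ioc (0:ℝ) 1 → ξ ∈ Ioc (0:ℝ) 1 → p ∈ Ioc (0:ℝ) 1 →
        p = Real.exp (-(L * q * ξ) / (ξ + p * q * (1 - ξ)) - K) →
        V ≤ 1 / ξ + 2 / (q * p) - 1) ∧
      (∃ p ∈ Ioc (0:ℝ) 1,
        p = Real.exp (-(L * 1 * ξs) / (ξs + p * 1 * (1 - ξs)) - K) ∧
        1 / ξs + 2 / (1 * p) - 1 = V)) := by
  refine ⟨fun hL2 => ⟨fun q ξ p hq hξ hp hfix => ?_, by congr 1; ring, ?_⟩, fun hL2 => ?_⟩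
  · obtain ⟨T, ⟨hT, hTL⟩, hle⟩ := exists_peakAoIAtLoad_le_of_fixedPoint hL hq hξ hp.1 hfix
    rw [← peakAoIAtLoad_self K hL.ne']
    exact (peakAoIAtLoad_self_le hL hL2 hT hTL).trans hle
  · rw [← peakAoIAtLoad_self K hL.ne', peakAoIAtLoad_eq_div_add_div L K hL.ne']
    field_simp
    ring
  intro s V ξs
  set T₀ := 2 / (s + 1)
  have hT₀pos : 0 < T₀ := by positivity
  have hT₀L : T₀ * (L + T₀) = L := two_div_sqrt_add_one_mul hL
  have hT₀lt : T₀ < L := by nlinarith -- else `L = T₀ (L + T₀) ≥ 2 L² > L`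
  obtain ⟨hV, hξs⟩ := closedForm_eq_of_two_div L K (sqrt_nonneg (1 + 4 / L))
  obtain ⟨hξ, hp, hfix, hval⟩ := fixedPoint_of_load hK.le hT₀pos hT₀lt rfl hξs
  refine ⟨hξ, fun q ξ p hq hξ' hp' hfix' => ?_, _, hp, hfix, hval.trans hV.symm⟩
  obtain ⟨T, ⟨hT, -⟩, hle⟩ := exists_peakAoIAtLoad_le_of_fixedPoint hL hq hξ' hp'.1 hfix'
  exact hV.trans_le ((peakAoIAtLoad_le_of_mul_add_eq hL.le hT₀pos hT hT₀L).trans hle)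
end

section
/- Fix ξ ∈ (0,1), L > 0, K > 0, and let p* ∈ (0,1) be the unique stable solution of p* = exp{-Lξ/(ξ + p*(1-ξ)) - K} (the q = 1 fixed point). If L ≤ 1 + p*(1-ξ)/ξ, then the peak AoI A_p(q) = 1/ξ + 2/(qp(q)) - 1, where p(q) is the stable solution of p = exp{-Lqξ/(ξ + pq(1-ξ)) - K}, is minimized over q ∈ (0,1] at q = 1, with value 1/ξ + 2/p* - 1. -/
/-! Write `u = q p(q)` for the effective access rate and `c(u) = Lξ / (ξ + u (1 - ξ))`.
Taking logarithms in the fixed-point equation gives `log u + c(u) + K = log q + (1 - q) c(u)`,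
which is `≤ 0` as soon as `c(u) ≤ 1`, while `log p* + c(p*) + K = 0`. The small-density condition
says exactly `c(p*) ≤ 1`, and it makes `u ↦ log u + c(u)` strictly increasing past `p*`.
Hence `u > p*` is impossible, i.e. `q p(q) ≤ p*`, and the peak AoI is smallest at `q = 1`. -/

open Real Set

lemma log_add_div_lt_log_add_div {a b M s u : ℝ} (ha : 0 < a) (hb : 0 ≤ b) (hs : 0 < s)
    (hsu : s < u) (hM : M ≤ a + s * b) :
    log s + M / (a + s * b) < log u + M / (a + u * b) := by
  have hu : 0 < u := hs.trans hsu
  have hAs : 0 < a + s * b := by positivity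
  have hAu : 0 < a + u * b := by positivity
  have hlog : (u - s) / u ≤ log u - log s := by
    have h := log_le_sub_one_of_pos (div_pos hs hu)
    rw [log_div hs.ne' hu.ne'] at h
    have : s / u - 1 = -((u - s) / u) := by field_simp; ring
    linarith
  have hdiv : M / (a + s * b) - M / (a + u * b) < (u - s) / u := by
    rw [div_sub_div _ _ hAs.ne' hAu.ne', div_lt_div_iff₀ (mul_pos hAs hAu) hu]
    -- `M b u ≤ (a + s b) b u < (a + s b)(a + u b)`
    have hMbu : M * (b * u) ≤ (a + s * b) * (b * u) :=
      mul_le_mul_of_nonneg_right hM (mul_nonneg hb hu.le)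
    nlinarith [mul_pos hAs ha, mul_pos (sub_pos.2 hsu) (mul_pos hAs ha)]
  linarith

lemma log_mul_add_add_nonpos {q p c K : ℝ} (hq0 : 0 < q) (hq1 : q ≤ 1) (hc : c ≤ 1)
    (hp : p = exp (-(c * q) - K)) :
    log (q * p) + c + K ≤ 0 := by
  have hlogp : log p = -(c * q) - K := by rw [hp, log_exp]
  have hp0 : 0 < p := hp ▸ exp_pos _
  rw [log_mul hq0.ne' hp0.ne', hlogp]
  nlinarith [log_le_sub_one_of_pos hq0, mul_nonneg (sub_nonneg.2 hc) (sub_nonneg.2 hq1)]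

theorem stmt18_general (L K ξ pstar : ℝ) (hξ : ξ ∈ Ioo (0:ℝ) 1)
    (hps : pstar ∈ Ioo (0:ℝ) 1)
    (hfix : pstar = Real.exp (-(L * ξ) / (ξ + pstar * (1 - ξ)) - K))
    (hsmall : L ≤ 1 + pstar * (1 - ξ) / ξ) :
    (∀ q p : ℝ, q ∈ Ioc (0:ℝ) 1 → p ∈ Ioc (0:ℝ) 1 →
      p = Real.exp (-(L * q * ξ) / (ξ + p * q * (1 - ξ)) - K) →
      1 / ξ + 2 / pstar - 1 ≤ 1 / ξ + 2 / (q * p) - 1) ∧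
    pstar = Real.exp (-(L * 1 * ξ) / (ξ + pstar * 1 * (1 - ξ)) - K) ∧
    1 / ξ + 2 / (1 * pstar) - 1 = 1 / ξ + 2 / pstar - 1 := by
  obtain ⟨hξ0, hξ1⟩ := hξ
  have hb : 0 ≤ 1 - ξ := by linarith
  have hLξ : L * ξ ≤ ξ + pstar * (1 - ξ) := by
    calc L * ξ ≤ (1 + pstar * (1 - ξ) / ξ) * ξ := mul_le_mul_of_nonneg_right hsmall hξ0.le
      _ = ξ + pstar * (1 - ξ) := by field_simp
  refine ⟨fun q p hq hp hpfix => ?_, by simpa using hfix, by rw [one_mul]⟩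
  have hle : q * p ≤ pstar := by
    by_contra! hlt
    have hpos : 0 < ξ + q * p * (1 - ξ) := by nlinarith [mul_pos hq.1 hp.1]
    have hc : L * ξ / (ξ + q * p * (1 - ξ)) ≤ 1 := by
      rw [div_le_one hpos]; nlinarith
    have hpfix' : p = exp (-(L * ξ / (ξ + q * p * (1 - ξ)) * q) - K) := by
      conv_lhs => rw [hpfix]
      rw [mul_comm p q]; ring_nf
    have hstar : log pstar = -(L * ξ / (ξ + pstar * (1 - ξ))) - K := by
      conv_lhs => rw [hfix, log_exp, neg_div]
    have hqp := log_mul_add_add_nonpos hq.1 hq.2 hc hpfix'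
    have hmono := log_add_div_lt_log_add_div hξ0 hb hps.1 hlt hLξ
    linarith
  gcongr
  exact mul_pos hq.1 hp.1

theorem stmt18 (L K ξ pstar : ℝ) (hξ : ξ ∈ Ioo (0:ℝ) 1) (hL : 0 < L) (hK : 0 < K)
    (hps : pstar ∈ Ioo (0:ℝ) 1)
    (hfix : pstar = Real.exp (-(L * ξ) / (ξ + pstar * (1 - ξ)) - K))
    (hsmall : L ≤ 1 + pstar * (1 - ξ) / ξ) :
    (∀ q p : ℝ, q ∈ Ioc (0:ℝ) 1 → p ∈ Ioc (0:ℝ) 1 →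
      p = Real.exp (-(L * q * ξ) / (ξ + p * q * (1 - ξ)) - K) →
      1 / ξ + 2 / pstar - 1 ≤ 1 / ξ + 2 / (q * p) - 1) ∧
    pstar = Real.exp (-(L * 1 * ξ) / (ξ + pstar * 1 * (1 - ξ)) - K) ∧
    1 / ξ + 2 / (1 * pstar) - 1 = 1 / ξ + 2 / pstar - 1 :=
  stmt18_general L K ξ pstar hξ hps hfix hsmall
end
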